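/- Heap update preserves ownership at unowned addresses: if H ≈_a H' (the heaps H and H' are equivalent modulo the address a) and own(H, v, τ)(a) = 0, where τ is ownership well-formed, then own(H, v, τ) = own(H', v, τ). -/
import Mathlib


namespace ConSORT

/-! ### Basic names and runtime values -/

abbrev Var := ℕ
abbrev Addr := ℕ
abbrev Label := ℕ
abbrev CtxVar := ℕ
abbrev FnName := ℕ

/-- Runtime values: integers or heap addresses. -/
inductive Value
  | int (n : ℤ)
  | addr (a : Addr)
  deriving DecidableEq

/-- Heaps are finite maps from addresses to runtime values. -/
abbrev Heap := Finmap (fun _ : Addr => Value)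

/-- Register files are finite maps from variables to runtime values. -/
abbrev RegFile := Finmap (fun _ : Var => Value)

/-! ### Refinement formulas -/

/-- Values that may occur in refinements: the value variable ν, program variables, literals. -/
inductive RVal
  | nu
  | var (x : Var)
  | int (n : ℤ)
  deriving DecidableEq

/-- Predicate contexts `C ::= ε | λ | ℓ : C`. -/
inductive PredCtx
  | eps
  | cvar (l : CtxVar)
  | cons (lab : Label) (C : PredCtx)

def PredCtx.ofList : List Label → PredCtx
  | [] => .eps
  | lab :: ls => .cons lab (PredCtx.ofList ls)

/-- Refinement formulas. Atomic predicate symbols are modelled by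
    (the semantics of) predicates over integer lists. -/
inductive Formula
  | top
  | or (p q : Formula)
  | neg (p : Formula)
  | pred (P : List ℤ → Prop) (args : List RVal)
  | eq (a b : RVal)
  | ctxP (ls : List Label) (C : PredCtx)

/-- Derived conjunction. -/
def Formula.and (p q : Formula) : Formula := .neg (.or (.neg p) (.neg q))

/-- Derived implication. -/
def Formula.imp (p q : Formula) : Formula := .or (.neg p) q

def RVal.eval (rho : Var → ℤ) (nuv : ℤ) : RVal → ℤ
  | .nu => nuv
  | .var x => rho x
  | .int n => n

def PredCtx.evalC (kap : CtxVar → List Label) : PredCtx → List Label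
  | .eps => []
  | .cvar l => kap l
  | .cons lab C => lab :: C.evalC kap

/-- Satisfaction of a formula under a valuation of program variables, the value
    variable ν, and context variables. Context query predicates are interpreted
    by the prefix relation on call strings. -/
def Formula.sat (rho : Var → ℤ) (nuv : ℤ) (kap : CtxVar → List Label) : Formula → Prop
  | .top => True
  | .or p q => p.sat rho nuv kap ∨ q.sat rho nuv kap
  | .neg p => ¬ p.sat rho nuv kap
  | .pred P args => P (args.map (RVal.eval rho nuv))
  | .eq a b => a.eval rho nuv = b.eval rho nuv
  | .ctxP ls C => ls <+: C.evalC kap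

/-- Validity: true under every valuation. -/
def Formula.valid (phi : Formula) : Prop := ∀ rho nuv kap, phi.sat rho nuv kap

def Formula.mapRV (f : RVal → RVal) : Formula → Formula
  | .top => .top
  | .or p q => .or (p.mapRV f) (q.mapRV f)
  | .neg p => .neg (p.mapRV f)
  | .pred P args => .pred P (args.map f)
  | .eq a b => .eq (f a) (f b)
  | .ctxP ls C => .ctxP ls C

/-- `[v/ν]φ`: substitute `v` for the value variable ν. -/
def Formula.substNu (v : RVal) (phi : Formula) : Formula :=
  phi.mapRV (fun rv => if rv = .nu then v else rv)

/-- `[x'/x]φ`: rename program variable `x` to `x'`. -/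
def Formula.renameVar (x' x : Var) (phi : Formula) : Formula :=
  phi.mapRV (fun rv => if rv = .var x then .var x' else rv)

/-- `[ν/z]φ`: substitute ν for the program variable `z`. -/
def Formula.varToNu (z : Var) (phi : Formula) : Formula :=
  phi.mapRV (fun rv => if rv = .var z then .nu else rv)

/-- Substitution of register-file values for variables (integer bindings only). -/
def RVal.substReg (R : RegFile) : RVal → RVal
  | .var x =>
    match R.lookup x with
    | some (Value.int n) => .int n
    | _ => .var x
  | v => v

/-- `[R]φ`. -/
def Formula.substReg (R : RegFile) (phi : Formula) : Formula :=
  phi.mapRV (RVal.substReg R)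

def PredCtx.substCV (lam : CtxVar) (C' : PredCtx) : PredCtx → PredCtx
  | .eps => .eps
  | .cvar l => if l = lam then C' else .cvar l
  | .cons lab C => .cons lab (PredCtx.substCV lam C' C)

/-- Substitution of a predicate context for a context variable in a formula. -/
def Formula.substCV (lam : CtxVar) (C' : PredCtx) : Formula → Formula
  | .top => .top
  | .or p q => .or (p.substCV lam C') (q.substCV lam C')
  | .neg p => .neg (p.substCV lam C')
  | .pred P args => .pred P args
  | .eq a b => .eq a b
  | .ctxP ls C => .ctxP ls (PredCtx.substCV lam C' C)

def RVal.fpv : RVal → Set Var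
  | .var x => {x}
  | _ => ∅

/-- Free program variables of a formula (excluding ν). -/
def Formula.fpv : Formula → Set Var
  | .top => ∅
  | .or p q => p.fpv ∪ q.fpv
  | .neg p => p.fpv
  | .pred _ args => {x | RVal.var x ∈ args}
  | .eq a b => a.fpv ∪ b.fpv
  | .ctxP _ _ => ∅

def PredCtx.fcv : PredCtx → Set CtxVar
  | .eps => ∅
  | .cvar l => {l}
  | .cons _ C => C.fcv

/-- Free context variables of a formula. -/
def Formula.fcv : Formula → Set CtxVar
  | .top => ∅
  | .or p q => p.fcv ∪ q.fcv
  | .neg p => p.fcv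
  | .pred _ _ => ∅
  | .eq _ _ => ∅
  | .ctxP _ C => C.fcv

/-! ### Types -/

/-- Ownerships: rationals in the interval [0,1]. -/
abbrev Own01 := {q : ℚ // 0 ≤ q ∧ q ≤ 1}

def oZero : Own01 := ⟨0, by norm_num⟩
def oOne : Own01 := ⟨1, by norm_num⟩

/-- Types: refined integers and references carrying a fractional ownership. -/
inductive Ty
  | int (phi : Formula)
  | ref (t : Ty) (r : Own01)

/-- The maximal type ⊤ₙ of a chain of n references. -/
def topTy : ℕ → Ty
  | 0 => .int .top
  | n + 1 => .ref (topTy n) oZero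

/-- Ownership well-formedness: every reference with ownership 0 is some ⊤ₙ. -/
def Ty.OwnWF : Ty → Prop
  | .int _ => True
  | .ref t r => (r = oZero → ∃ n, t = topTy n) ∧ t.OwnWF

/-- The shape (number of reference constructors) of a type. -/
def Ty.size : Ty → ℕ
  | .int _ => 0
  | .ref t _ => t.size + 1

/-- Strengthening τ ∧_z ψ. -/
def Ty.strengthen (t : Ty) (z : Var) (psi : Formula) : Ty :=
  match t with
  | .int phi => .int (phi.and (psi.varToNu z))
  | .ref t' r => .ref t' r

/-- Typed equality proposition `x =_τ y`. -/
def tyEq (t : Ty) (x y : Var) : Formula :=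
  match t with
  | .int _ => .eq (.var x) (.var y)
  | .ref _ _ => .top

def Ty.rename (x' x : Var) : Ty → Ty
  | .int phi => .int (phi.renameVar x' x)
  | .ref t r => .ref (t.rename x' x) r

/-- Iterated renaming: pairs are (new, old). -/
def Ty.renameAll (sig : List (Var × Var)) (t : Ty) : Ty :=
  sig.foldr (fun p t => t.rename p.1 p.2) t

def Ty.substCV (lam : CtxVar) (C : PredCtx) : Ty → Ty
  | .int phi => .int (phi.substCV lam C)
  | .ref t r => .ref (t.substCV lam C) r

/-- Type environments: finite maps from variables to types. -/
abbrev TyEnv := Finmap (fun _ : Var => Ty)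

/-- Satisfaction of the denotation ⟦Γ⟧ of a type environment under a valuation. -/
def envSat (G : TyEnv) (rho : Var → ℤ) (nuv : ℤ) (kap : CtxVar → List Label) : Prop :=
  ∀ x phi, G.lookup x = some (Ty.int phi) → (Formula.substNu (RVal.var x) phi).sat rho nuv kap

/-- `Γ ⊨ φ` : validity of ⟦Γ⟧ ⇒ φ. -/
def EnvModels (G : TyEnv) (phi : Formula) : Prop :=
  ∀ rho nuv kap, envSat G rho nuv kap → phi.sat rho nuv kap

/-! ### Typing contexts and well-formedness -/

/-- Typing contexts: a context variable or a concrete call string. -/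
inductive TyCtx
  | cvar (l : CtxVar)
  | concrete (ls : List Label)

def TyCtx.toPredCtx : TyCtx → PredCtx
  | .cvar l => .cvar l
  | .concrete ls => PredCtx.ofList ls

def TyCtx.cv : TyCtx → Set CtxVar
  | .cvar l => {l}
  | .concrete _ => ∅

/-- Refinement well-formedness `L | Γ ⊢wf φ`. -/
def FormulaWF (L : TyCtx) (G : TyEnv) (phi : Formula) : Prop :=
  (∀ x ∈ phi.fpv, ∃ psi, G.lookup x = some (Ty.int psi)) ∧ phi.fcv ⊆ L.cv

def TyWF (L : TyCtx) (G : TyEnv) : Ty → Prop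
  | .int phi => FormulaWF L G phi
  | .ref t _ => TyWF L G t

def EnvWF (L : TyCtx) (G : TyEnv) : Prop :=
  ∀ x t, G.lookup x = some t → TyWF L G t

/-! ### Subtyping and type addition -/

inductive Subty (G : TyEnv) : Ty → Ty → Prop
  | int {phi1 phi2 : Formula} :
      (∀ rho nuv kap, envSat G rho nuv kap → phi1.sat rho nuv kap → phi2.sat rho nuv kap) →
      Subty G (.int phi1) (.int phi2)
  | ref {t1 t2 : Ty} {r1 r2 : Own01} :
      r2 ≤ r1 → Subty G t1 t2 → Subty G (.ref t1 r1) (.ref t2 r2)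

/-- Environment subtyping Γ ≤ Γ'. -/
def EnvSub (G G' : TyEnv) : Prop :=
  ∀ x t', G'.lookup x = some t' → ∃ t, G.lookup x = some t ∧ Subty G t t'

/-- Result subtyping (S-Res) : `Γ₁, τ₁ ≤ Γ₂, τ₂`. -/
def ResSub (G1 : TyEnv) (t1 : Ty) (G2 : TyEnv) (t2 : Ty) : Prop :=
  ∃ x, x ∉ G1 ∧ x ∉ G2 ∧ EnvSub (G1.insert x t1) (G2.insert x t2)

/-- Type equivalence τ ≈ τ'. -/
def TyEquiv (t1 t2 : Ty) : Prop := Subty ∅ t1 t2 ∧ Subty ∅ t2 t1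

/-- Type addition τ₁ + τ₂ = τ₃, the least commutative partial operation. -/
inductive TyAdd : Ty → Ty → Ty → Prop
  | int {phi1 phi2 : Formula} : TyAdd (.int phi1) (.int phi2) (.int (phi1.and phi2))
  | ref {t1 t2 t3 : Ty} {r1 r2 r3 : Own01} :
      TyAdd t1 t2 t3 → r1.1 + r2.1 = r3.1 →
      TyAdd (.ref t1 r1) (.ref t2 r2) (.ref t3 r3)
  | comm {t1 t2 t3 : Ty} : TyAdd t1 t2 t3 → TyAdd t2 t1 t3

/-! ### Expressions -/

inductive Expr
  | var (x : Var)
  | letVar (x y : Var) (e : Expr)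
  | letInt (x : Var) (n : ℤ) (e : Expr)
  | ifz (x : Var) (e1 e2 : Expr)
  | mkref (x y : Var) (e : Expr)
  | deref (x y : Var) (e : Expr)
  | call (x : Var) (f : FnName) (lab : Label) (ys : List Var) (e : Expr)
  | assign (x y : Var) (e : Expr)        -- x := y ; e
  | aliasVV (x y : Var) (e : Expr)       -- alias(x = y) ; e
  | aliasVD (x y : Var) (e : Expr)       -- alias(x = *y) ; e
  | assert (phi : Formula) (e : Expr)
  | seq (e1 e2 : Expr)

def substV (x' x z : Var) : Var := if z = x then x' else z

/-- `[x'/x]e`. -/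
def Expr.rename (x' x : Var) : Expr → Expr
  | .var z => .var (substV x' x z)
  | .letVar z y e => .letVar (substV x' x z) (substV x' x y) (e.rename x' x)
  | .letInt z n e => .letInt (substV x' x z) n (e.rename x' x)
  | .ifz z e1 e2 => .ifz (substV x' x z) (e1.rename x' x) (e2.rename x' x)
  | .mkref z y e => .mkref (substV x' x z) (substV x' x y) (e.rename x' x)
  | .deref z y e => .deref (substV x' x z) (substV x' x y) (e.rename x' x)
  | .call z f lab ys e => .call (substV x' x z) f lab (ys.map (substV x' x)) (e.rename x' x)
  | .assign z y e => .assign (substV x' x z) (substV x' x y) (e.rename x' x)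
  | .aliasVV z y e => .aliasVV (substV x' x z) (substV x' x y) (e.rename x' x)
  | .aliasVD z y e => .aliasVD (substV x' x z) (substV x' x y) (e.rename x' x)
  | .assert phi e => .assert (phi.renameVar x' x) (e.rename x' x)
  | .seq e1 e2 => .seq (e1.rename x' x) (e2.rename x' x)

/-- Iterated renaming: pairs are (new, old); `[y₁/x₁]⋯[yₙ/xₙ]e`. -/
def Expr.renameAll (sig : List (Var × Var)) (e : Expr) : Expr :=
  sig.foldr (fun p e => e.rename p.1 p.2) e

/-! ### Function types and typing -/

/-- Context-polymorphic function types ∀λ.⟨x:τ⟩ → ⟨x:τ' | τ⟩. -/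
structure FunTy where
  cv : CtxVar
  params : List (Var × Ty)
  outs : List (Var × Ty)
  ret : Ty

abbrev FnEnv := FnName → Option FunTy

def updateAll (G : TyEnv) (ps : List (Var × Ty)) : TyEnv :=
  ps.foldl (fun D p => D.insert p.1 p.2) G

def listToEnv (ps : List (Var × Ty)) : TyEnv := updateAll ∅ ps

/-- σα σx τ : the substitution applied to callee types at a call site labeled `lab`
    under typing context `L`, with actuals `ys`. -/
def callSubstTy (ft : FunTy) (lab : Label) (L : TyCtx) (ys : List Var) (t : Ty) : Ty :=
  Ty.substCV ft.cv (PredCtx.cons lab L.toPredCtx)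
    (Ty.renameAll (ys.zip (ft.params.map Prod.fst)) t)

/-- The typing judgment Θ | L | Γ ⊢ e : τ ⊣ Γ'. -/
inductive HasTy (Th : FnEnv) : TyCtx → TyEnv → Expr → Ty → TyEnv → Prop
  | var {L : TyCtx} {G : TyEnv} {x : Var} {t1 t2 tx : Ty} :
      G.lookup x = some tx → TyAdd t1 t2 tx →
      HasTy Th L G (.var x) t1 (G.insert x t2)
  | letVar {L : TyCtx} {G G' : TyEnv} {x y : Var} {e : Expr} {t1 t2 ty t : Ty} :
      G.lookup y = some ty → TyAdd t1 t2 ty → x ∉ G →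
      HasTy Th L
        ((G.insert y (t1.strengthen y (tyEq t1 y x))).insert x
          (t2.strengthen x (tyEq t2 x y))) e t G' →
      x ∉ G' →
      HasTy Th L G (.letVar x y e) t G'
  | letInt {L : TyCtx} {G G' : TyEnv} {x : Var} {n : ℤ} {e : Expr} {t : Ty} :
      x ∉ G →
      HasTy Th L (G.insert x (.int (.eq .nu (.int n)))) e t G' →
      x ∉ G' →
      HasTy Th L G (.letInt x n e) t G'
  | ifz {L : TyCtx} {G G' : TyEnv} {x : Var} {phi : Formula} {e1 e2 : Expr} {t : Ty} :
      G.lookup x = some (.int phi) →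
      HasTy Th L (G.insert x (.int (phi.and (.eq .nu (.int 0))))) e1 t G' →
      HasTy Th L (G.insert x (.int (phi.and (.neg (.eq .nu (.int 0)))))) e2 t G' →
      HasTy Th L G (.ifz x e1 e2) t G'
  | mkref {L : TyCtx} {G G' : TyEnv} {x y : Var} {e : Expr} {t1 t2 ty t : Ty} :
      G.lookup y = some ty → TyAdd t1 t2 ty → x ∉ G →
      HasTy Th L
        ((G.insert y t1).insert x (.ref (t2.strengthen x (tyEq t2 x y)) oOne)) e t G' →
      x ∉ G' →
      HasTy Th L G (.mkref x y e) t G'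
  | deref {L : TyCtx} {G G' : TyEnv} {x y : Var} {e : Expr}
      {t1 t2 t12 t' t : Ty} {r : Own01} :
      G.lookup y = some (.ref t12 r) → TyAdd t1 t2 t12 → x ∉ G →
      ((0 : ℚ) < r.1 → t' = t1.strengthen y (tyEq t1 y x)) →
      (r.1 = 0 → t' = t1) →
      HasTy Th L ((G.insert y (.ref t' r)).insert x t2) e t G' →
      x ∉ G' →
      HasTy Th L G (.deref x y e) t G'
  | seq {L : TyCtx} {G G' G'' : TyEnv} {e1 e2 : Expr} {t' t'' : Ty} :
      HasTy Th L G e1 t' G' →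
      HasTy Th L G' e2 t'' G'' →
      HasTy Th L G (.seq e1 e2) t'' G''
  | assert {L : TyCtx} {G G' : TyEnv} {phi : Formula} {e : Expr} {t : Ty} :
      EnvModels G phi →
      FormulaWF (.concrete []) G phi →
      HasTy Th L G e t G' →
      HasTy Th L G (.assert phi e) t G'
  | assign {L : TyCtx} {G G' : TyEnv} {lhs rhs : Var} {e : Expr} {t1 t2 tr t' t : Ty} :
      G.lookup rhs = some tr → TyAdd t1 t2 tr →
      G.lookup lhs = some (.ref t' oOne) →
      t'.size = t2.size →
      HasTy Th L
        ((G.insert rhs t1).insert lhs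
          (.ref (t2.strengthen lhs (tyEq t2 lhs rhs)) oOne)) e t G' →
      HasTy Th L G (.assign lhs rhs e) t G'
  | aliasVV {L : TyCtx} {G G' : TyEnv} {x y : Var} {e : Expr}
      {t1 t2 t1' t2' ts ts' t : Ty} {r1 r2 r1' r2' : Own01} :
      G.lookup x = some (.ref t1 r1) → G.lookup y = some (.ref t2 r2) →
      TyAdd (.ref t1 r1) (.ref t2 r2) ts →
      TyAdd (.ref t1' r1') (.ref t2' r2') ts' →
      TyEquiv ts ts' →
      HasTy Th L ((G.insert x (.ref t1' r1')).insert y (.ref t2' r2')) e t G' →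
      HasTy Th L G (.aliasVV x y e) t G'
  | aliasVD {L : TyCtx} {G G' : TyEnv} {x y : Var} {e : Expr}
      {t1 t2 t1' t2' ts ts' t : Ty} {r1 r2 r1' r2' r : Own01} :
      G.lookup x = some (.ref t1 r1) → G.lookup y = some (.ref (.ref t2 r2) r) →
      TyAdd (.ref t1 r1) (.ref t2 r2) ts →
      TyAdd (.ref t1' r1') (.ref t2' r2') ts' →
      TyEquiv ts ts' →
      HasTy Th L ((G.insert x (.ref t1' r1')).insert y (.ref (.ref t2' r2') r)) e t G' →
      HasTy Th L G (.aliasVD x y e) t G'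
  | sub {L : TyCtx} {G Gp Gq G' : TyEnv} {e : Expr} {tp t' : Ty} :
      EnvSub G Gp →
      HasTy Th L Gp e tp Gq →
      ResSub Gq tp G' t' →
      HasTy Th L G e t' G'
  | call {L : TyCtx} {G G' : TyEnv} {x : Var} {f : FnName} {lab : Label}
      {ys : List Var} {e : Expr} {t' : Ty} {ft : FunTy} :
      Th f = some ft →
      ys.length = ft.params.length →
      ys.length = ft.outs.length →
      (∀ p ∈ ys.zip ft.params, G.lookup p.1 = some (callSubstTy ft lab L ys p.2.2)) →
      HasTy Th L
        ((updateAll G ((ys.zip ft.outs).map (fun p => (p.1, callSubstTy ft lab L ys p.2.2)))).insert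
          x (callSubstTy ft lab L ys ft.ret)) e t' G' →
      x ∉ G' →
      HasTy Th L G (.call x f lab ys e) t' G'

/-! ### Evaluation contexts, frames and their typing -/

inductive ECtx
  | hole
  | seq (E : ECtx) (e : Expr)

def ECtx.plug : ECtx → Expr → Expr
  | .hole, e => e
  | .seq E e2, e => .seq (E.plug e) e2

/-- Return contexts `F = E[let x = •^ℓ in e]`. -/
structure Frame where
  E : ECtx
  x : Var
  lab : Label
  e : Expr

/-- `F[z] = E[let x = z in e]`. -/
def Frame.subst (F : Frame) (z : Var) : Expr := F.E.plug (.letVar F.x z F.e)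

/-- Evaluation-context typing Θ | • : τ₀ ⊣ Γ₀ | L ⊢ectx E : τ ⊣ Γ (TE-Hole, TE-Seq). -/
inductive ECtxTy (Th : FnEnv) (t0 : Ty) (G0 : TyEnv) (L : TyCtx) : ECtx → Ty → TyEnv → Prop
  | hole : ECtxTy Th t0 G0 L .hole t0 G0
  | seq {E : ECtx} {e : Expr} {t' t'' : Ty} {G' G'' : TyEnv} :
      ECtxTy Th t0 G0 L E t' G' →
      HasTy Th L G' e t'' G'' →
      ECtxTy Th t0 G0 L (.seq E e) t'' G''

/-- Frame typing (TE-Stack): Θ | • : τ ⊣ Γ | L ⊢ectx E[let x = •^ℓ in e] : τ'' ⊣ Γ''. -/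
def FrameTy (Th : FnEnv) (t : Ty) (G : TyEnv) (L : TyCtx) (F : Frame)
    (t'' : Ty) (G'' : TyEnv) : Prop :=
  ∃ t' G', ECtxTy Th t' G' L F.E t'' G'' ∧ F.x ∉ G ∧ F.x ∉ G' ∧
    HasTy Th L (G.insert F.x t) F.e t' G'

/-! ### Programs and program typing -/

structure FunDef where
  params : List Var
  body : Expr

abbrev Defs := FnName → Option FunDef

/-- T-FunDef: a definition checks against its declared type. -/
def FunDefTy (Th : FnEnv) (ft : FunTy) (d : FunDef) : Prop :=
  d.params = ft.params.map Prod.fst ∧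
  HasTy Th (.cvar ft.cv) (listToEnv ft.params) d.body ft.ret (listToEnv ft.outs)

/-- T-Funs: Θ ⊢ D. -/
def DefsTy (Th : FnEnv) (D : Defs) : Prop :=
  (∀ f, (D f).isSome ↔ (Th f).isSome) ∧
  ∀ f d ft, D f = some d → Th f = some ft → FunDefTy Th ft d

/-- Well-formedness of a function type. -/
def FunTyWF (ft : FunTy) : Prop :=
  EnvWF (.cvar ft.cv) (listToEnv ft.params) ∧
  EnvWF (.cvar ft.cv) (listToEnv ft.outs) ∧
  TyWF (.cvar ft.cv) (listToEnv ft.outs) ft.ret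

/-- ⊢wf Θ. -/
def FnEnvWF (Th : FnEnv) : Prop := ∀ f ft, Th f = some ft → FunTyWF ft

/-- T-Prog: ⊢ ⟨D, e⟩. -/
def ProgTy (D : Defs) (e : Expr) : Prop :=
  ∃ Th : FnEnv, DefsTy Th D ∧ FnEnvWF Th ∧ ∃ t G, HasTy Th (.concrete []) ∅ e t G

/-! ### Semantic satisfaction, ownership and consistency -/

/-- SATv(H, R, v, τ). -/
def SATv (H : Heap) (R : RegFile) : Ty → Value → Prop
  | .int phi, v => ∃ n : ℤ, v = .int n ∧ (Formula.substReg R (Formula.substNu (.int n) phi)).valid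
  | .ref t _, v => ∃ (a : Addr) (w : Value), v = .addr a ∧ H.lookup a = some w ∧ SATv H R t w

/-- own(H, v, τ) as a map Addr → ℚ. -/
def ownMap (H : Heap) : Ty → Value → Addr → ℚ
  | .int _, _, _ => 0
  | .ref t r, v, b =>
    match v with
    | .addr a =>
      match H.lookup a with
      | some w => (if b = a then r.1 else 0) + ownMap H t w b
      | none => 0
    | .int _ => 0

/-- Own(H, R, Γ) = Σ_{x ∈ dom(Γ)} own(H, R(x), Γ(x)). -/
def Own (H : Heap) (R : RegFile) (G : TyEnv) (a : Addr) : ℚ :=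
  (G.entries.map (fun p =>
    match R.lookup p.1 with
    | some v => ownMap H p.2 v a
    | none => 0)).sum

/-- SAT(H, R, Γ). -/
def SAT (H : Heap) (R : RegFile) (G : TyEnv) : Prop :=
  ∀ x t, G.lookup x = some t → ∃ v, R.lookup x = some v ∧ SATv H R t v

/-- Cons(H, R, Γ). -/
def Cons (H : Heap) (R : RegFile) (G : TyEnv) : Prop :=
  SAT H R G ∧ ∀ a ∈ H, Own H R G a ≤ 1

/-! ### Operational semantics -/

inductive Config
  | st (H : Heap) (R : RegFile) (S : List Frame) (e : Expr)
  | assertFail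
  | aliasFail

/-- The small-step relation ⟨H,R,F⃗,e⟩ →_D C. -/
inductive Step (D : Defs) : Config → Config → Prop
  | var {H R F S x} :
      Step D (.st H R (F :: S) (.var x)) (.st H R S (F.subst x))
  | seqStep {H R S E x e} :
      Step D (.st H R S (ECtx.plug E (.seq (.var x) e))) (.st H R S (ECtx.plug E e))
  | letVar {H R S E x y x' e v} :
      x' ∉ R → R.lookup y = some v →
      Step D (.st H R S (ECtx.plug E (.letVar x y e)))
             (.st H (R.insert x' v) S (ECtx.plug E (e.rename x' x)))
  | letInt {H R S E x x' n e} :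
      x' ∉ R →
      Step D (.st H R S (ECtx.plug E (.letInt x n e)))
             (.st H (R.insert x' (.int n)) S (ECtx.plug E (e.rename x' x)))
  | ifTrue {H R S E x e1 e2} :
      R.lookup x = some (.int 0) →
      Step D (.st H R S (ECtx.plug E (.ifz x e1 e2))) (.st H R S (ECtx.plug E e1))
  | ifFalse {H R S E x n e1 e2} :
      R.lookup x = some (.int n) → n ≠ 0 →
      Step D (.st H R S (ECtx.plug E (.ifz x e1 e2))) (.st H R S (ECtx.plug E e2))
  | mkref {H R S E x y x' a e v} :
      a ∉ H → x' ∉ R → R.lookup y = some v →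
      Step D (.st H R S (ECtx.plug E (.mkref x y e)))
             (.st (H.insert a v) (R.insert x' (.addr a)) S (ECtx.plug E (e.rename x' x)))
  | deref {H R S E x y x' a e v} :
      R.lookup y = some (.addr a) → H.lookup a = some v → x' ∉ R →
      Step D (.st H R S (ECtx.plug E (.deref x y e)))
             (.st H (R.insert x' v) S (ECtx.plug E (e.rename x' x)))
  | call {H R S E x f lab ys e' d} :
      D f = some d →
      Step D (.st H R S (ECtx.plug E (.call x f lab ys e')))
             (.st H R (⟨E, x, lab, e'⟩ :: S) (Expr.renameAll (ys.zip d.params) d.body))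
  | assign {H R S E x y a e v} :
      R.lookup x = some (.addr a) → a ∈ H → R.lookup y = some v →
      Step D (.st H R S (ECtx.plug E (.assign x y e)))
             (.st (H.insert a v) R S (ECtx.plug E e))
  | aliasVV {H R S E x y e v} :
      R.lookup x = some v → R.lookup y = some v →
      Step D (.st H R S (ECtx.plug E (.aliasVV x y e))) (.st H R S (ECtx.plug E e))
  | aliasVVFail {H R S E x y e v1 v2} :
      R.lookup x = some v1 → R.lookup y = some v2 → v1 ≠ v2 →
      Step D (.st H R S (ECtx.plug E (.aliasVV x y e))) .aliasFail
  | aliasVD {H R S E x y a e v} :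
      R.lookup y = some (.addr a) → H.lookup a = some v → R.lookup x = some v →
      Step D (.st H R S (ECtx.plug E (.aliasVD x y e))) (.st H R S (ECtx.plug E e))
  | aliasVDFail {H R S E x y a e v v'} :
      R.lookup y = some (.addr a) → H.lookup a = some v → R.lookup x = some v' → v' ≠ v →
      Step D (.st H R S (ECtx.plug E (.aliasVD x y e))) .aliasFail
  | assert {H R S E phi e} :
      (Formula.substReg R phi).valid →
      Step D (.st H R S (ECtx.plug E (.assert phi e))) (.st H R S (ECtx.plug E e))
  | assertFail {H R S E phi e} :
      ¬ (Formula.substReg R phi).valid →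
      Step D (.st H R S (ECtx.plug E (.assert phi e))) .assertFail

/-! ### Configuration typing -/

/-- Stack typing: the stack `S`, with trace `ls`, consumes a hole of type `t`
    under environment `G`. -/
inductive StackTy (Th : FnEnv) : List Frame → List Label → Ty → TyEnv → Prop
  | nil {t : Ty} {G : TyEnv} : StackTy Th [] [] t G
  | cons {S : List Frame} {ls : List Label} {F : Frame} {t t' : Ty} {G G' : TyEnv} :
      StackTy Th S ls t' G' →
      FrameTy Th t G (.concrete ls) F t' G' →
      StackTy Th (F :: S) (F.lab :: ls) t G

/-- Configuration typing ⊢conf^D C. -/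
inductive ConfigTy (D : Defs) : Config → Prop
  | aliasFail : ConfigTy D .aliasFail
  | st {Th : FnEnv} {H : Heap} {R : RegFile} {S : List Frame} {e : Expr}
      {G Gout : TyEnv} {ls : List Label} {t : Ty} :
      DefsTy Th D →
      Cons H R G →
      StackTy Th S ls t Gout →
      HasTy Th (.concrete ls) G e t Gout →
      ConfigTy D (.st H R S e)

/-! ### Auxiliary notions used in individual lemmas -/

/-- `H ⊢ v ⇓ n` : v reaches an integer with n dereferences in H. -/
inductive Reaches (H : Heap) : Value → ℕ → Prop
  | int {n : ℤ} : Reaches H (.int n) 0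
  | addr {a : Addr} {v : Value} {n : ℕ} :
      H.lookup a = some v → Reaches H v n → Reaches H (.addr a) (n + 1)

/-- Heaps equivalent modulo the address `a`. -/
def HeapEquivMod (a : Addr) (H H' : Heap) : Prop :=
  (∀ b : Addr, b ∈ H ↔ b ∈ H') ∧
  (∀ b : Addr, b ∈ H → b ≠ a → H.lookup b = H'.lookup b) ∧
  (∀ n, Reaches H (.addr a) n ↔ Reaches H' (.addr a) n)

/-- `R ⊢vs τ` : R is a valid substitution for τ. -/
def ValidSubst (R : RegFile) : Ty → Prop
  | .int phi => ∀ x ∈ phi.fpv, ∃ n : ℤ, R.lookup x = some (Value.int n)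
  | .ref t _ => ValidSubst R t

/-- `R ⊑ R'`. -/
def RegExt (R R' : RegFile) : Prop :=
  ∀ x v, R.lookup x = some v → R'.lookup x = some v

/-- `Γ' = [ℓ⃗/λ]Γ`, characterized pointwise. -/
def EnvSubstCV (lam : CtxVar) (C : PredCtx) (G G' : TyEnv) : Prop :=
  ∀ x, G'.lookup x = (G.lookup x).map (Ty.substCV lam C)

/-- `Γ' = [x'/x]Γ`, characterized pointwise (keys and values renamed). -/
def EnvRename (x' x : Var) (G G' : TyEnv) : Prop :=
  ∀ z, G'.lookup z =
    if z = x' then (G.lookup x).map (Ty.rename x' x)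
    else if z = x then none
    else (G.lookup z).map (Ty.rename x' x)

lemma ownMap_nonneg (H : Heap) : ∀ (t : Ty) (v : Value) (b : Addr), 0 ≤ ownMap H t v b := by
  intro t
  induction t with
  | int phi => intro v b; simp [ownMap]
  | ref t r ih =>
    intro v b
    cases v with
    | int n => simp [ownMap]
    | addr c =>
      simp only [ownMap]
      cases h : H.lookup c with
      | none => simp
      | some w =>
        by_cases hb : b = c
        · subst hb; simp only [if_pos rfl]; exact add_nonneg r.2.1 (ih w b)
        · simpa [hb] using ih w b

lemma ownMap_topTy (H : Heap) : ∀ (n : ℕ) (v : Value) (b : Addr),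
    ownMap H (topTy n) v b = 0 := by
  intro n
  induction n with
  | zero => intro v b; simp [topTy, ownMap]
  | succ n ih =>
    intro v b
    cases v with
    | int m => simp [topTy, ownMap]
    | addr c =>
      simp only [topTy, ownMap]
      cases h : H.lookup c with
      | none => rfl
      | some w => simp [ih w b, oZero]

lemma ownMap_ref_topTy (H : Heap) (n : ℕ) (v : Value) (b : Addr) :
    ownMap H (.ref (topTy n) oZero) v b = 0 := by
  cases v with
  | int m => simp [ownMap]
  | addr c =>
    simp only [ownMap]
    cases h : H.lookup c with
    | none => rfl
    | some w => simp [ownMap_topTy, oZero]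

/-- Heap update preserves ownership at unowned addresses. -/
theorem heap_update_preserves_own (a : Addr) (H H' : Heap) (v : Value) (t : Ty)
    (heq : HeapEquivMod a H H') (hwf : t.OwnWF) (hzero : ownMap H t v a = 0) :
    ∀ b, ownMap H t v b = ownMap H' t v b := by
  induction t generalizing v with
  | int phi => intro b; simp [ownMap]
  | ref t r ih =>
    intro b
    cases v with
    | int n => simp [ownMap]
    | addr c =>
      by_cases hc : c ∈ H
      · obtain ⟨w, hw⟩ := Option.isSome_iff_exists.mp (Finmap.lookup_isSome.mpr hc)
        by_cases hca : c = a
        · -- the address is a itself: forced r = 0 and t = topTy n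
          subst hca
          simp only [ownMap, hw, if_pos rfl, if_true] at hzero
          have h1 : r.1 = 0 := le_antisymm (by nlinarith [ownMap_nonneg H t w c]) r.2.1
          have hr0 : r = oZero := Subtype.ext h1
          obtain ⟨n, hn⟩ := hwf.1 hr0
          subst hn; subst hr0
          rw [ownMap_ref_topTy, ownMap_ref_topTy]
        · -- c ≠ a : lookups agree
          have hlk := heq.2.1 c hc hca
          have hne : a ≠ c := fun h => hca h.symm
          have hw' : Finmap.lookup c H' = some w := hlk ▸ hw
          simp only [ownMap, hw, if_neg hne, zero_add] at hzero
          simp only [ownMap, hw, hw']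
          rw [ih w hwf.2 hzero b]
      · have hc' : c ∉ H' := fun h => hc ((heq.1 c).mpr h)
        simp only [ownMap]
        rw [Finmap.lookup_eq_none.mpr hc, Finmap.lookup_eq_none.mpr hc']

end ConSORT
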